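/- arXiv:1602.08063 — 4 statements merged into one kernel-verified Lean document; each statement's English description precedes it below -/
import Mathlib

section
/- Let f be a Condorcet extension satisfying participation. Let R be a preference profile on an electorate N and let B ⊊ A be a proper subset of the alternatives such that every voter in N ranks every alternative of B below every alternative of A ∖ B (i.e., y ≻_i x for all i ∈ N, x ∈ B, y ∈ A ∖ B). Then f(R) ∉ B. -/
open scoped Classical

/-- A preference profile: a nonempty electorate of voters, each voter in the
electorate having a strict linear preference order over the alternatives. -/
structure Profile (V A : Type*) where
  electorate : Finset V
  nonempty : electorate.Nonempty
  pref : ∀ i ∈ electorate, A → A → Prop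
  isSTO : ∀ i (hi : i ∈ electorate), IsStrictTotalOrder A (pref i hi)

namespace Profile

variable {V A : Type*}

/-- The profile `R - i` obtained by removing voter `i` from the electorate. -/
def erase [DecidableEq V] (R : Profile V A) (i : V)
    (h : (R.electorate.erase i).Nonempty) : Profile V A where
  electorate := R.electorate.erase i
  nonempty := h
  pref := fun j hj => R.pref j (Finset.mem_of_mem_erase hj)
  isSTO := fun j hj => R.isSTO j (Finset.mem_of_mem_erase hj)

end Profile

/-- The majority margin g_R(x,y). -/
noncomputable def margin {V A : Type*} (R : Profile V A) (x y : A) : ℤ :=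
  ((R.electorate.attach.filter (fun i => R.pref i.1 i.2 x y)).card : ℤ) -
  ((R.electorate.attach.filter (fun i => R.pref i.1 i.2 y x)).card : ℤ)

/-- `x` is a Condorcet winner of `R` if it beats every other alternative. -/
def IsCondorcetWinner {V A : Type*} (R : Profile V A) (x : A) : Prop :=
  ∀ y, y ≠ x → 0 < margin R x y

/-- A voting rule is a Condorcet extension if it selects the Condorcet winner
whenever one exists. -/
def CondorcetExtension {V A : Type*} (f : Profile V A → A) : Prop :=
  ∀ R x, IsCondorcetWinner R x → f R = x

/-- Participation: every voter weakly prefers the outcome with her vote to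
the outcome without it. -/
def Participation {V A : Type*} [DecidableEq V] (f : Profile V A → A) : Prop :=
  ∀ (R : Profile V A) (i : V) (hi : i ∈ R.electorate)
    (h : (R.electorate.erase i).Nonempty),
    f R = f (R.erase i h) ∨ R.pref i hi (f R) (f (R.erase i h))

/-- `x` is a maximin winner of `R`. -/
noncomputable def IsMaximinWinner {V A : Type*} [Fintype A] [DecidableEq A]
    (R : Profile V A) (x : A) : Prop :=
  ∀ z : A,
    (Finset.univ.erase z).inf (fun y => (margin R z y : WithTop ℤ)) ≤
    (Finset.univ.erase x).inf (fun y => (margin R x y : WithTop ℤ))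

def MaximinExtension {V A : Type*} [Fintype A] [DecidableEq A]
    (f : Profile V A → A) : Prop :=
  ∀ R, IsMaximinWinner R (f R)

/-- The Kemeny score of a ranking `K` for a profile `R`: the total pairwise
agreement of `K` with voters' preferences. -/
noncomputable def kemenyScore {V A : Type*} [Fintype A] (R : Profile V A)
    (K : A → A → Prop) : ℕ :=
  ∑ i ∈ R.electorate.attach,
    ((Finset.univ : Finset (A × A)).filter
      (fun p => K p.1 p.2 ∧ R.pref i.1 i.2 p.1 p.2)).card

/-- `x` is a Kemeny winner: it is top-ranked in some Kemeny ranking. -/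
def IsKemenyWinner {V A : Type*} [Fintype A] (R : Profile V A) (x : A) : Prop :=
  ∃ K : A → A → Prop, IsStrictTotalOrder A K ∧
    (∀ K' : A → A → Prop, IsStrictTotalOrder A K' →
      kemenyScore R K' ≤ kemenyScore R K) ∧
    (∀ y, y ≠ x → K x y)

def KemenyExtension {V A : Type*} [Fintype A] (f : Profile V A → A) : Prop :=
  ∀ R, IsKemenyWinner R (f R)

/-- A dominant set: a nonempty set whose members all beat all non-members. -/
def IsDominantSet {V A : Type*} [Fintype A] (R : Profile V A) (B : Finset A) : Prop :=
  B.Nonempty ∧ ∀ a ∈ B, ∀ b ∉ B, 0 < margin R a b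

/-- `x` is in the top cycle (the minimal dominant set) of `R`. -/
def InTopCycle {V A : Type*} [Fintype A] (R : Profile V A) (x : A) : Prop :=
  ∀ B : Finset A, IsDominantSet R B → x ∈ B

/-- Set-valued notions: maximum and minimum of a set w.r.t. a strict order. -/
def IsMaxOf {A : Type*} (r : A → A → Prop) (S : Finset A) (x : A) : Prop :=
  x ∈ S ∧ ∀ y ∈ S, y = x ∨ r x y

def IsMinOf {A : Type*} (r : A → A → Prop) (S : Finset A) (x : A) : Prop :=
  x ∈ S ∧ ∀ y ∈ S, y = x ∨ r y x

def SetCondorcetExtension {V A : Type*} [DecidableEq A]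
    (F : Profile V A → Finset A) : Prop :=
  ∀ R x, IsCondorcetWinner R x → F R = {x}

/-- Optimistic participation for set-valued rules. -/
def OptimisticParticipation {V A : Type*} [DecidableEq V]
    (F : Profile V A → Finset A) : Prop :=
  ∀ (R : Profile V A) (i : V) (hi : i ∈ R.electorate)
    (h : (R.electorate.erase i).Nonempty) (x y : A),
    IsMaxOf (R.pref i hi) (F R) x → IsMaxOf (R.pref i hi) (F (R.erase i h)) y →
    x = y ∨ R.pref i hi x y

/-- Pessimistic participation for set-valued rules. -/
def PessimisticParticipation {V A : Type*} [DecidableEq V]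
    (F : Profile V A → Finset A) : Prop :=
  ∀ (R : Profile V A) (i : V) (hi : i ∈ R.electorate)
    (h : (R.electorate.erase i).Nonempty) (x y : A),
    IsMinOf (R.pref i hi) (F R) x → IsMinOf (R.pref i hi) (F (R.erase i h)) y →
    x = y ∨ R.pref i hi x y

/-- A lottery over the alternatives. -/
structure Lottery (A : Type*) [Fintype A] where
  prob : A → ℝ
  nonneg : ∀ x, 0 ≤ prob x
  sum_one : ∑ x, prob x = 1

/-- Stochastic dominance: `p` is weakly SD-preferred to `q` w.r.t. `r`. -/
noncomputable def SDPref {A : Type*} [Fintype A] (r : A → A → Prop)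
    (p q : Lottery A) : Prop :=
  ∀ x : A,
    ∑ y ∈ Finset.univ.filter (fun y => y = x ∨ r y x), q.prob y ≤
    ∑ y ∈ Finset.univ.filter (fun y => y = x ∨ r y x), p.prob y

def ProbCondorcetExtension {V A : Type*} [Fintype A]
    (f : Profile V A → Lottery A) : Prop :=
  ∀ R x, IsCondorcetWinner R x → (f R).prob x = 1

def StrongSDParticipation {V A : Type*} [DecidableEq V] [Fintype A]
    (f : Profile V A → Lottery A) : Prop :=
  ∀ (R : Profile V A) (i : V) (hi : i ∈ R.electorate)
    (h : (R.electorate.erase i).Nonempty),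
    SDPref (R.pref i hi) (f R) (f (R.erase i h))

/-!
By induction on the electorate. A single voter's top alternative is a Condorcet winner, so `f`
elects it, and it lies outside `B` because that voter ranks the alternatives outside `B` higher.
With more voters, remove one: by induction `f (R - i) ∉ B`, and participation says voter `i`
weakly prefers `f R` to `f (R - i)`, which is impossible if `f R ∈ B`.
-/

open Finset

section

variable {V A : Type*}

def RanksBelowComplement (R : Profile V A) (B : Finset A) : Prop :=
  ∀ i (hi : i ∈ R.electorate), ∀ x ∈ B, ∀ y ∉ B, R.pref i hi y x

theorem RanksBelowComplement.erase [DecidableEq V] {R : Profile V A} {B : Finset A}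
    (hRB : RanksBelowComplement R B) (i : V) (h : (R.electorate.erase i).Nonempty) :
    RanksBelowComplement (R.erase i h) B :=
  fun j hj => hRB j (mem_of_mem_erase hj)

theorem exists_forall_ne_rel [Finite A] [Nonempty A] (r : A → A → Prop)
    [IsStrictTotalOrder A r] : ∃ x, ∀ y, y ≠ x → r x y := by
  obtain ⟨x, -, hx⟩ := (Finite.wellFounded_of_trans_of_irrefl r).has_min Set.univ Set.univ_nonempty
  refine ⟨x, fun y hy => ?_⟩
  rcases trichotomous_of r x y with h | rfl | h
  exacts [h, absurd rfl hy, absurd h (hx y trivial)]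

theorem margin_pos_of_forall_pref (R : Profile V A) {x y : A}
    (h : ∀ i (hi : i ∈ R.electorate), R.pref i hi x y) : 0 < margin R x y := by
  have hxy : R.electorate.attach.filter (fun i => R.pref i.1 i.2 x y) = R.electorate.attach :=
    filter_true_of_mem fun i _ => h i.1 i.2
  have hyx : R.electorate.attach.filter (fun i => R.pref i.1 i.2 y x) = ∅ :=
    filter_false_of_mem fun i _ => by
      have := R.isSTO i.1 i.2
      exact asymm (h i.1 i.2)
  rw [margin, hxy, hyx, card_attach, card_empty, Nat.cast_zero, sub_zero, Nat.cast_pos]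
  exact R.nonempty.card_pos

theorem isCondorcetWinner_of_electorate_eq_singleton {R : Profile V A} {i : V}
    (hR : R.electorate = {i}) {x : A}
    (hx : ∀ y, y ≠ x → R.pref i (hR ▸ mem_singleton_self i) x y) : IsCondorcetWinner R x :=
  fun y hy => margin_pos_of_forall_pref R fun j hj => by
    obtain rfl := mem_singleton.mp (hR ▸ hj)
    exact hx y hy

theorem notMem_of_forall_ne_rel {r : A → A → Prop} [IsStrictTotalOrder A r]
    {B : Finset A} (hB : ∀ x ∈ B, ∀ y ∉ B, r y x) {c : A} (hc : c ∉ B) {x : A}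
    (hx : ∀ y, y ≠ x → r x y) : x ∉ B := fun hxB =>
  asymm (hx c fun h => hc (h ▸ hxB)) (hB x hxB c hc)

theorem CondorcetExtension.apply_notMem_of_card_eq_one [Finite A] {f : Profile V A → A}
    (hC : CondorcetExtension f) {B : Finset A} {c : A} (hc : c ∉ B) {R : Profile V A}
    (hR : R.electorate.card = 1) (hRB : RanksBelowComplement R B) : f R ∉ B := by
  obtain ⟨i, hRi⟩ := card_eq_one.mp hR
  have hi : i ∈ R.electorate := hRi ▸ mem_singleton_self i
  have := R.isSTO i hi
  have : Nonempty A := ⟨c⟩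
  obtain ⟨x, hx⟩ := exists_forall_ne_rel (R.pref i hi)
  rw [hC R x (isCondorcetWinner_of_electorate_eq_singleton hRi hx)]
  exact notMem_of_forall_ne_rel (hRB i hi) hc hx

theorem Participation.apply_notMem_of_apply_erase_notMem [DecidableEq V]
    {f : Profile V A → A} (hP : Participation f) {R : Profile V A} {B : Finset A}
    (hRB : RanksBelowComplement R B) {i : V} (hi : i ∈ R.electorate)
    (h : (R.electorate.erase i).Nonempty) (hf : f (R.erase i h) ∉ B) : f R ∉ B := by
  intro hfR
  rcases hP R i hi h with heq | hpref
  · exact hf (heq ▸ hfR)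
  · have := R.isSTO i hi
    exact asymm hpref (hRB i hi _ hfR _ hf)

end

/-- If `f` is a Condorcet extension satisfying participation, `R` a
profile, and `B ⊊ A` a set of "bad" alternatives that every voter of the
electorate ranks below every alternative outside `B`, then `f(R) ∉ B`. -/
theorem stmt0_avoid_bad_alternatives {V A : Type*} [DecidableEq V] [Fintype A]
    (f : Profile V A → A) (hC : CondorcetExtension f) (hP : Participation f)
    (R : Profile V A) (B : Finset A) (hB : B ⊂ Finset.univ)
    (hbad : ∀ i (hi : i ∈ R.electorate), ∀ x ∈ B, ∀ y ∉ B, R.pref i hi y x) :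
    f R ∉ B := by
  obtain ⟨c, -, hc⟩ := exists_of_ssubset hB
  suffices ∀ n (R : Profile V A), R.electorate.card = n + 1 → RanksBelowComplement R B →
      f R ∉ B from this _ R (Nat.succ_pred_eq_of_pos R.nonempty.card_pos).symm hbad
  intro n
  induction n with
  | zero => exact fun R hR hRB => hC.apply_notMem_of_card_eq_one hc hR hRB
  | succ n ih =>
    intro R hR hRB
    obtain ⟨i, hi⟩ := R.nonempty
    have hcard : (R.electorate.erase i).card = n + 1 := by
      rw [card_erase_of_mem hi, hR, Nat.add_sub_cancel]
    have hne : (R.electorate.erase i).Nonempty := card_pos.mp (hcard ▸ n.succ_pos)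
    exact hP.apply_notMem_of_apply_erase_notMem hRB hi hne (ih _ hcard (hRB.erase i hne))
end

section
/- Suppose m ≥ 4 and n ≥ 7. Then there is no maximin extension (voting rule that always selects a maximin winner) that satisfies participation. -/
open scoped Classical

-- ============ auxiliary development ============
namespace NoShowAux

lemma profile_ext {V A : Type*} (R S : Profile V A) (hE : R.electorate = S.electorate)
    (hp : ∀ i (h1 : i ∈ R.electorate) (h2 : i ∈ S.electorate), R.pref i h1 = S.pref i h2) :
    R = S := by
  obtain ⟨E1, n1, p1, s1⟩ := R
  obtain ⟨E2, n2, p2, s2⟩ := S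
  dsimp at hE hp
  subst hE
  have hpp : p1 = p2 := by
    funext i h
    exact hp i h h
  subst hpp
  rfl

variable {V A : Type*} [Fintype A] [DecidableEq A]

noncomputable def key (g : Fin 4 ↪ A) (rk : Fin 4 → ℕ) (x : A) : ℕ :=
  if h : ∃ j, g j = x then rk h.choose else 4

lemma key_g (g : Fin 4 ↪ A) (rk : Fin 4 → ℕ) (j : Fin 4) : key g rk (g j) = rk j := by
  have h : ∃ j', g j' = g j := ⟨j, rfl⟩
  rw [key, dif_pos h]
  congr 1
  exact g.injective h.choose_spec

lemma key_notin (g : Fin 4 ↪ A) (rk : Fin 4 → ℕ) (x : A) (hx : ∀ j, g j ≠ x) :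
    key g rk x = 4 := by
  rw [key, dif_neg]
  rintro ⟨j, hj⟩
  exact hx j hj

noncomputable def pr (g : Fin 4 ↪ A) (τ : A → ℕ) (rk : Fin 4 → ℕ) (x y : A) : Prop :=
  key g rk x < key g rk y ∨ (key g rk x = key g rk y ∧ τ x < τ y)

lemma pr_sto (g : Fin 4 ↪ A) (τ : A → ℕ) (rk : Fin 4 → ℕ)
    (hτ : Function.Injective τ) : IsStrictTotalOrder A (pr g τ rk) where
  trichotomous := by
    intro x y
    suffices H : pr g τ rk x y ∨ x = y ∨ pr g τ rk y x by
      intro h1 h2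
      rcases H with H | H | H
      · exact absurd H h1
      · exact H
      · exact absurd H h2
    rcases Nat.lt_trichotomy (key g rk x) (key g rk y) with h | h | h
    · exact Or.inl (Or.inl h)
    · rcases Nat.lt_trichotomy (τ x) (τ y) with h' | h' | h'
      · exact Or.inl (Or.inr ⟨h, h'⟩)
      · exact Or.inr (Or.inl (hτ h'))
      · exact Or.inr (Or.inr (Or.inr ⟨h.symm, h'⟩))
    · exact Or.inr (Or.inr (Or.inl h))
  irrefl := by
    intro x h
    rcases h with h | ⟨-, h⟩ <;> exact lt_irrefl _ h
  trans := by
    rintro x y z (h1 | ⟨h1, h1'⟩) (h2 | ⟨h2, h2'⟩)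
    · exact Or.inl (h1.trans h2)
    · exact Or.inl (lt_of_lt_of_eq h1 h2)
    · exact Or.inl (lt_of_eq_of_lt h1 h2)
    · exact Or.inr ⟨h1.trans h2, h1'.trans h2'⟩

lemma pr_g_iff (g : Fin 4 ↪ A) (τ : A → ℕ) (rk : Fin 4 → ℕ) (j j' : Fin 4)
    (h : rk j ≠ rk j') : pr g τ rk (g j) (g j') ↔ rk j < rk j' := by
  rw [pr, key_g, key_g]
  constructor
  · rintro (h' | ⟨h1, -⟩)
    · exact h'
    · exact absurd h1 h
  · exact fun h' => Or.inl h'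

lemma pr_g_extra (g : Fin 4 ↪ A) (τ : A → ℕ) (rk : Fin 4 → ℕ) (j : Fin 4) (x : A)
    (hx : ∀ j', g j' ≠ x) (hrk : rk j < 4) :
    pr g τ rk (g j) x ∧ ¬ pr g τ rk x (g j) := by
  have h1 := key_g g rk j
  have h2 := key_notin g rk x hx
  constructor
  · exact Or.inl (by rw [h1, h2]; exact hrk)
  · rintro (h' | ⟨h', -⟩) <;> rw [h1, h2] at h' <;> omega


set_option linter.unusedSectionVars false

variable {V : Type*} [DecidableEq V]

noncomputable def inv (e : Fin 7 ↪ V) (v : V) : Fin 7 :=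
  if h : ∃ k, e k = v then h.choose else 0

lemma inv_e (e : Fin 7 ↪ V) (k : Fin 7) : inv e (e k) = k := by
  have h : ∃ k', e k' = e k := ⟨k, rfl⟩
  rw [inv, dif_pos h]
  exact e.injective h.choose_spec

noncomputable def Pfun (e : Fin 7 ↪ V) (g : Fin 4 ↪ A) (τ : A → ℕ)
    (RK : Fin 7 → Fin 4 → ℕ) (v : V) : A → A → Prop :=
  pr g τ (RK (inv e v))

noncomputable def mkProf (e : Fin 7 ↪ V) (g : Fin 4 ↪ A) (τ : A → ℕ)
    (hτ : Function.Injective τ) (RK : Fin 7 → Fin 4 → ℕ)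
    (t : Finset (Fin 7)) (ht : t.Nonempty) : Profile V A where
  electorate := t.map e
  nonempty := Finset.map_nonempty.mpr ht
  pref := fun i _ => Pfun e g τ RK i
  isSTO := fun i _ => pr_sto g τ _ hτ

lemma card_attach_filter {s : Finset V} (P : V → Prop) :
    (s.attach.filter (fun i => P i.1)).card = (s.filter P).card := by
  apply Finset.card_bij (fun a _ => a.1)
  · intro a ha
    simp only [Finset.mem_filter] at ha ⊢
    exact ⟨a.2, ha.2⟩
  · intro a ha b hb h
    exact Subtype.ext h
  · intro b hb
    simp only [Finset.mem_filter] at hb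
    exact ⟨⟨b, hb.1⟩, Finset.mem_filter.mpr ⟨Finset.mem_attach _ _, hb.2⟩, rfl⟩

lemma margin_mkProf (e : Fin 7 ↪ V) (g : Fin 4 ↪ A) (τ : A → ℕ)
    (hτ : Function.Injective τ) (RK : Fin 7 → Fin 4 → ℕ)
    (t : Finset (Fin 7)) (ht : t.Nonempty) (x y : A) :
    margin (mkProf e g τ hτ RK t ht) x y =
      ((t.filter fun k => pr g τ (RK k) x y).card : ℤ) -
      ((t.filter fun k => pr g τ (RK k) y x).card : ℤ) := by
  have hc : ∀ x' y' : A,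
      (((mkProf e g τ hτ RK t ht).electorate.attach.filter
        (fun i => (mkProf e g τ hτ RK t ht).pref i.1 i.2 x' y')).card)
      = (t.filter fun k => pr g τ (RK k) x' y').card := by
    intro x' y'
    have h1 : (((mkProf e g τ hτ RK t ht).electorate.attach.filter
        (fun i => (mkProf e g τ hτ RK t ht).pref i.1 i.2 x' y')).card)
        = ((t.map e).filter (fun v => Pfun e g τ RK v x' y')).card :=
      card_attach_filter (fun v => Pfun e g τ RK v x' y')
    rw [h1, Finset.filter_map, Finset.card_map]
    congr 1
    apply Finset.filter_congr
    intro k _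
    simp [Pfun, inv_e, Function.comp]
  rw [margin, hc, hc]


lemma margin_g (e : Fin 7 ↪ V) (g : Fin 4 ↪ A) (τ : A → ℕ)
    (hτ : Function.Injective τ) (RK : Fin 7 → Fin 4 → ℕ)
    (t : Finset (Fin 7)) (ht : t.Nonempty) (j j' : Fin 4)
    (h : ∀ k, RK k j ≠ RK k j') :
    margin (mkProf e g τ hτ RK t ht) (g j) (g j') =
      ((t.filter fun k => RK k j < RK k j').card : ℤ) -
      ((t.filter fun k => RK k j' < RK k j).card : ℤ) := by
  rw [margin_mkProf]
  congr 2
  · refine congrArg Finset.card (Finset.filter_congr ?_)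
    intro k _
    simpa using pr_g_iff g τ (RK k) j j' (h k)
  · refine congrArg Finset.card (Finset.filter_congr ?_)
    intro k _
    simpa using pr_g_iff g τ (RK k) j' j (fun hh => h k hh.symm)

lemma margin_extra (e : Fin 7 ↪ V) (g : Fin 4 ↪ A) (τ : A → ℕ)
    (hτ : Function.Injective τ) (RK : Fin 7 → Fin 4 → ℕ)
    (t : Finset (Fin 7)) (ht : t.Nonempty) (j : Fin 4) (x : A)
    (hx : ∀ j', g j' ≠ x) (hrk : ∀ k, RK k j < 4) :
    margin (mkProf e g τ hτ RK t ht) (g j) x = (t.card : ℤ) := by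
  rw [margin_mkProf]
  have h1 : (t.filter fun k => pr g τ (RK k) (g j) x) = t := by
    apply Finset.filter_true_of_mem
    intro k _
    exact (pr_g_extra g τ (RK k) j x hx (hrk k)).1
  have h2 : (t.filter fun k => pr g τ (RK k) x (g j)) = ∅ := by
    apply Finset.filter_false_of_mem
    intro k _
    exact (pr_g_extra g τ (RK k) j x hx (hrk k)).2
  rw [h1, h2]
  simp

lemma margin_extra' (e : Fin 7 ↪ V) (g : Fin 4 ↪ A) (τ : A → ℕ)
    (hτ : Function.Injective τ) (RK : Fin 7 → Fin 4 → ℕ)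
    (t : Finset (Fin 7)) (ht : t.Nonempty) (j : Fin 4) (x : A)
    (hx : ∀ j', g j' ≠ x) (hrk : ∀ k, RK k j < 4) :
    margin (mkProf e g τ hτ RK t ht) x (g j) = -(t.card : ℤ) := by
  rw [margin_mkProf]
  have h1 : (t.filter fun k => pr g τ (RK k) (g j) x) = t := by
    apply Finset.filter_true_of_mem
    intro k _
    exact (pr_g_extra g τ (RK k) j x hx (hrk k)).1
  have h2 : (t.filter fun k => pr g τ (RK k) x (g j)) = ∅ := by
    apply Finset.filter_false_of_mem
    intro k _
    exact (pr_g_extra g τ (RK k) j x hx (hrk k)).2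
  rw [h1, h2]
  simp

variable [Fintype A]

/-- If `x*` has all margins at least `v`, but `z ≠ x*` has some margin at most
`u < v` against some `y ≠ z`, then `z` is not a maximin winner. -/
lemma not_winner (R : Profile V A) (xs z y : A) (v u : ℤ)
    (hlb : ∀ y', y' ≠ xs → v ≤ margin R xs y')
    (hy : y ≠ z) (hu : margin R z y ≤ u) (huv : u < v)
    (hw : IsMaximinWinner R z) : False := by
  have h1 : ((v : ℤ) : WithTop ℤ) ≤
      (Finset.univ.erase xs).inf (fun y' => (margin R xs y' : WithTop ℤ)) := by
    apply Finset.le_inf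
    intro y' hy'
    exact_mod_cast hlb y' (Finset.ne_of_mem_erase hy')
  have h2 : (Finset.univ.erase z).inf (fun y' => (margin R z y' : WithTop ℤ)) ≤
      ((u : ℤ) : WithTop ℤ) := by
    have hmem : y ∈ Finset.univ.erase z := Finset.mem_erase.mpr ⟨hy, Finset.mem_univ _⟩
    refine le_trans (Finset.inf_le hmem) ?_
    exact_mod_cast hu
  have h3 := hw xs
  have : ((v : ℤ) : WithTop ℤ) ≤ ((u : ℤ) : WithTop ℤ) := le_trans h1 (le_trans h3 h2)
  have : v ≤ u := by exact_mod_cast this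
  omega

end NoShowAux

namespace NoShowAux
def RKa : Fin 7 → Fin 4 → ℕ :=
  ![![0,1,2,3], ![0,1,2,3], ![3,0,1,2], ![2,3,0,1], ![2,3,0,1], ![1,2,3,0], ![1,3,2,0]]
def RKb : Fin 7 → Fin 4 → ℕ :=
  ![![0,1,2,3], ![0,1,2,3], ![3,0,1,2], ![2,3,0,1], ![2,3,0,1], ![1,2,3,0], ![2,0,1,3]]
end NoShowAux


open NoShowAux Finset

/-- For `m ≥ 4` alternatives and `n ≥ 7` voters, there is no
maximin extension satisfying participation. -/
theorem stmt1_no_maximin_extension_with_participation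
    (V A : Type*) [Fintype V] [DecidableEq V] [Fintype A] [DecidableEq A]
    (hm : 4 ≤ Fintype.card A) (hn : 7 ≤ Fintype.card V) :
    ¬ ∃ f : Profile V A → A, MaximinExtension f ∧ Participation f := by
  rintro ⟨f, hmax, hpart⟩
  obtain ⟨e⟩ : Nonempty (Fin 7 ↪ V) :=
    Function.Embedding.nonempty_of_card_le (by simpa using hn)
  obtain ⟨g⟩ : Nonempty (Fin 4 ↪ A) :=
    Function.Embedding.nonempty_of_card_le (by simpa using hm)
  set τ : A → ℕ := fun x => ((Fintype.equivFin A) x : ℕ) with hτdef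
  have hτ : Function.Injective τ := fun x y h =>
    (Fintype.equivFin A).injective (Fin.val_injective h)
  have ht7 : (univ : Finset (Fin 7)).Nonempty := univ_nonempty
  have ht6 : ((univ : Finset (Fin 7)).erase 6).Nonempty := ⟨0, by decide⟩
  set R1 : Profile V A := mkProf e g τ hτ RKa univ ht7 with hR1def
  set R2 : Profile V A := mkProf e g τ hτ RKb univ ht7 with hR2def
  set R0 : Profile V A := mkProf e g τ hτ RKa (univ.erase 6) ht6 with hR0def
  have gne : ∀ j j' : Fin 4, j ≠ j' → g j ≠ g j' := fun j j' h hh => h (g.injective hh)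
  -- membership and nonemptiness facts
  have hi1 : e 6 ∈ R1.electorate := mem_map_of_mem e (mem_univ 6)
  have hi2 : e 6 ∈ R2.electorate := mem_map_of_mem e (mem_univ 6)
  have hE1 : R1.electorate.erase (e 6) = (univ.erase 6).map e :=
    (Finset.map_erase e univ 6).symm
  have hE2 : R2.electorate.erase (e 6) = (univ.erase 6).map e :=
    (Finset.map_erase e univ 6).symm
  have h1 : (R1.electorate.erase (e 6)).Nonempty := by
    rw [hE1]; exact ⟨e 0, mem_map_of_mem e (by decide)⟩
  have h2 : (R2.electorate.erase (e 6)).Nonempty := by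
    rw [hE2]; exact ⟨e 0, mem_map_of_mem e (by decide)⟩
  have hR1e : R1.erase (e 6) h1 = R0 := profile_ext _ _ hE1 (fun i a b => rfl)
  have hR2e : R2.erase (e 6) h2 = R0 := by
    apply profile_ext _ _ hE2
    intro i hi _
    obtain ⟨hne, hmem⟩ := Finset.mem_erase.mp hi
    obtain ⟨k, -, hk⟩ := Finset.mem_map.mp hmem
    have hk6 : k ≠ 6 := fun h => hne (by rw [← hk, h])
    have hval : ∀ k : Fin 7, k ≠ 6 → ∀ j, RKb k j = RKa k j := by decide
    show Pfun e g τ RKb i = Pfun e g τ RKa i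
    rw [← hk, Pfun, Pfun, inv_e, show RKb k = RKa k from funext (hval k hk6)]
  -- margins of R0
  have m0_01 : margin R0 (g 0) (g 1) = 4 := by
    rw [hR0def, margin_g e g τ hτ RKa _ ht6 0 1 (by decide)]; decide
  have m0_02 : margin R0 (g 0) (g 2) = 0 := by
    rw [hR0def, margin_g e g τ hτ RKa _ ht6 0 2 (by decide)]; decide
  have m0_03 : margin R0 (g 0) (g 3) = -2 := by
    rw [hR0def, margin_g e g τ hτ RKa _ ht6 0 3 (by decide)]; decide
  have m0_10 : margin R0 (g 1) (g 0) = -4 := by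
    rw [hR0def, margin_g e g τ hτ RKa _ ht6 1 0 (by decide)]; decide
  have m0_32 : margin R0 (g 3) (g 2) = -4 := by
    rw [hR0def, margin_g e g τ hτ RKa _ ht6 3 2 (by decide)]; decide
  -- margins of R1
  have m1_20 : margin R1 (g 2) (g 0) = -1 := by
    rw [hR1def, margin_g e g τ hτ RKa _ ht7 2 0 (by decide)]; decide
  have m1_21 : margin R1 (g 2) (g 1) = -1 := by
    rw [hR1def, margin_g e g τ hτ RKa _ ht7 2 1 (by decide)]; decide
  have m1_23 : margin R1 (g 2) (g 3) = 3 := by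
    rw [hR1def, margin_g e g τ hτ RKa _ ht7 2 3 (by decide)]; decide
  have m1_03 : margin R1 (g 0) (g 3) = -3 := by
    rw [hR1def, margin_g e g τ hτ RKa _ ht7 0 3 (by decide)]; decide
  have m1_10 : margin R1 (g 1) (g 0) = -5 := by
    rw [hR1def, margin_g e g τ hτ RKa _ ht7 1 0 (by decide)]; decide
  have m1_32 : margin R1 (g 3) (g 2) = -3 := by
    rw [hR1def, margin_g e g τ hτ RKa _ ht7 3 2 (by decide)]; decide
  -- margins of R2
  have m2_01 : margin R2 (g 0) (g 1) = 3 := by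
    rw [hR2def, margin_g e g τ hτ RKb _ ht7 0 1 (by decide)]; decide
  have m2_02 : margin R2 (g 0) (g 2) = -1 := by
    rw [hR2def, margin_g e g τ hτ RKb _ ht7 0 2 (by decide)]; decide
  have m2_03 : margin R2 (g 0) (g 3) = -1 := by
    rw [hR2def, margin_g e g τ hτ RKb _ ht7 0 3 (by decide)]; decide
  have m2_10 : margin R2 (g 1) (g 0) = -3 := by
    rw [hR2def, margin_g e g τ hτ RKb _ ht7 1 0 (by decide)]; decide
  have m2_21 : margin R2 (g 2) (g 1) = -3 := by
    rw [hR2def, margin_g e g τ hτ RKb _ ht7 2 1 (by decide)]; decide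
  have m2_32 : margin R2 (g 3) (g 2) = -5 := by
    rw [hR2def, margin_g e g τ hτ RKb _ ht7 3 2 (by decide)]; decide
  -- helper for "y is not one of the four" case
  have hextra : ∀ (y : A), y ≠ g 0 → y ≠ g 1 → y ≠ g 2 → y ≠ g 3 →
      ∀ j' : Fin 4, g j' ≠ y := by
    intro y hy0 hy1 hy2 hy3 j'
    fin_cases j'
    · exact fun h => hy0 h.symm
    · exact fun h => hy1 h.symm
    · exact fun h => hy2 h.symm
    · exact fun h => hy3 h.symm
  -- lower bounds
  have hlb0 : ∀ y', y' ≠ g 0 → (-2 : ℤ) ≤ margin R0 (g 0) y' := by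
    intro y' hy0
    by_cases hy1 : y' = g 1
    · rw [hy1, m0_01]; norm_num
    by_cases hy2 : y' = g 2
    · rw [hy2, m0_02]; norm_num
    by_cases hy3 : y' = g 3
    · rw [hy3, m0_03]
    rw [hR0def, margin_extra e g τ hτ RKa _ ht6 0 y' (hextra y' hy0 hy1 hy2 hy3) (by decide)]
    norm_num
  have hlb1 : ∀ y', y' ≠ g 2 → (-1 : ℤ) ≤ margin R1 (g 2) y' := by
    intro y' hy2
    by_cases hy0 : y' = g 0
    · rw [hy0, m1_20]
    by_cases hy1 : y' = g 1
    · rw [hy1, m1_21]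
    by_cases hy3 : y' = g 3
    · rw [hy3, m1_23]; norm_num
    rw [hR1def, margin_extra e g τ hτ RKa _ ht7 2 y' (hextra y' hy0 hy1 hy2 hy3) (by decide)]
    norm_num
  have hlb2 : ∀ y', y' ≠ g 0 → (-1 : ℤ) ≤ margin R2 (g 0) y' := by
    intro y' hy0
    by_cases hy1 : y' = g 1
    · rw [hy1, m2_01]; norm_num
    by_cases hy2 : y' = g 2
    · rw [hy2, m2_02]
    by_cases hy3 : y' = g 3
    · rw [hy3, m2_03]
    rw [hR2def, margin_extra e g τ hτ RKb _ ht7 0 y' (hextra y' hy0 hy1 hy2 hy3) (by decide)]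
    norm_num
  -- winner of R1 is g 2
  have hf1 : f R1 = g 2 := by
    have hw := hmax R1
    by_cases hc2 : f R1 = g 2
    · exact hc2
    exfalso
    by_cases hc0 : f R1 = g 0
    · rw [hc0] at hw
      exact not_winner R1 (g 2) (g 0) (g 3) (-1) (-3) hlb1 (gne 3 0 (by decide))
        (le_of_eq m1_03) (by norm_num) hw
    by_cases hc1 : f R1 = g 1
    · rw [hc1] at hw
      exact not_winner R1 (g 2) (g 1) (g 0) (-1) (-5) hlb1 (gne 0 1 (by decide))
        (le_of_eq m1_10) (by norm_num) hw
    by_cases hc3 : f R1 = g 3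
    · rw [hc3] at hw
      exact not_winner R1 (g 2) (g 3) (g 2) (-1) (-3) hlb1 (gne 2 3 (by decide))
        (le_of_eq m1_32) (by norm_num) hw
    · have hx := hextra (f R1) hc0 hc1 hc2 hc3
      have hme : margin R1 (f R1) (g 0) = -7 := by
        rw [hR1def, margin_extra' e g τ hτ RKa _ ht7 0 (f R1) hx (by decide)]
        simp
      exact not_winner R1 (g 2) (f R1) (g 0) (-1) (-7) hlb1 (hx 0)
        (le_of_eq hme) (by norm_num) hw
  -- winner of R2 is g 0
  have hf2 : f R2 = g 0 := by
    have hw := hmax R2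
    by_cases hc0 : f R2 = g 0
    · exact hc0
    exfalso
    by_cases hc1 : f R2 = g 1
    · rw [hc1] at hw
      exact not_winner R2 (g 0) (g 1) (g 0) (-1) (-3) hlb2 (gne 0 1 (by decide))
        (le_of_eq m2_10) (by norm_num) hw
    by_cases hc2 : f R2 = g 2
    · rw [hc2] at hw
      exact not_winner R2 (g 0) (g 2) (g 1) (-1) (-3) hlb2 (gne 1 2 (by decide))
        (le_of_eq m2_21) (by norm_num) hw
    by_cases hc3 : f R2 = g 3
    · rw [hc3] at hw
      exact not_winner R2 (g 0) (g 3) (g 2) (-1) (-5) hlb2 (gne 2 3 (by decide))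
        (le_of_eq m2_32) (by norm_num) hw
    · have hx := hextra (f R2) hc0 hc1 hc2 hc3
      have hme : margin R2 (f R2) (g 0) = -7 := by
        rw [hR2def, margin_extra' e g τ hτ RKb _ ht7 0 (f R2) hx (by decide)]
        simp
      exact not_winner R2 (g 0) (f R2) (g 0) (-1) (-7) hlb2 (hx 0)
        (le_of_eq hme) (by norm_num) hw
  -- winner of R0 is g 0 or g 2
  have hf0 : f R0 = g 0 ∨ f R0 = g 2 := by
    have hw := hmax R0
    by_cases hc0 : f R0 = g 0
    · exact Or.inl hc0
    by_cases hc2 : f R0 = g 2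
    · exact Or.inr hc2
    exfalso
    by_cases hc1 : f R0 = g 1
    · rw [hc1] at hw
      exact not_winner R0 (g 0) (g 1) (g 0) (-2) (-4) hlb0 (gne 0 1 (by decide))
        (le_of_eq m0_10) (by norm_num) hw
    by_cases hc3 : f R0 = g 3
    · rw [hc3] at hw
      exact not_winner R0 (g 0) (g 3) (g 2) (-2) (-4) hlb0 (gne 2 3 (by decide))
        (le_of_eq m0_32) (by norm_num) hw
    · have hx := hextra (f R0) hc0 hc1 hc2 hc3
      have hme : margin R0 (f R0) (g 0) = -6 := by
        rw [hR0def, margin_extra' e g τ hτ RKa _ ht6 0 (f R0) hx (by decide)]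
        decide
      exact not_winner R0 (g 0) (f R0) (g 0) (-2) (-6) hlb0 (hx 0)
        (le_of_eq hme) (by norm_num) hw
  -- the contradiction via participation
  rcases hf0 with hf0 | hf0
  · have hp := hpart R1 (e 6) hi1 h1
    rw [hR1e, hf1, hf0] at hp
    rcases hp with hp | hp
    · exact gne 2 0 (by decide) hp
    · have hp2 : pr g τ (RKa (inv e (e 6))) (g 2) (g 0) := hp
      rw [inv_e] at hp2
      exact absurd ((pr_g_iff g τ (RKa 6) 2 0 (by decide)).mp hp2) (by decide)
  · have hp := hpart R2 (e 6) hi2 h2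
    rw [hR2e, hf2, hf0] at hp
    rcases hp with hp | hp
    · exact gne 0 2 (by decide) hp
    · have hp2 : pr g τ (RKb (inv e (e 6))) (g 0) (g 2) := hp
      rw [inv_e] at hp2
      exact absurd ((pr_g_iff g τ (RKb 6) 0 2 (by decide)).mp hp2) (by decide)
end

section
/- Suppose m ≥ 4 and n ≥ 12. Then there is no Condorcet extension that satisfies participation. -/
open scoped Classical

/-!
A computer-found derivation does the work. Fix four alternatives `a 0, …, a 3`, ranked on top by
every voter, and ten voter types (rankings of them). A claim `(c, x)` says that the rule never
selects `a x` at a profile with `c j` voters of type `j`. Claims are derived either because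
another alternative is the Condorcet winner, or because removing or adding one voter of type `j`
would, by participation, force an outcome that is already excluded. A list of 48 such steps
excludes all four alternatives at one profile of twelve voters, while a Condorcet extension with
participation must select one of them there.
-/

open Finset Function

section

variable {V A τ : Type*}

namespace Profile

theorem pref_asymm (R : Profile V A) {i : V} (hi : i ∈ R.electorate) {x y : A}
    (h : R.pref i hi x y) : ¬ R.pref i hi y x :=
  have := R.isSTO i hi
  asymm h

theorem exists_top [Finite A] [Nonempty A] (R : Profile V A) {i : V} (hi : i ∈ R.electorate) :
    ∃ x, ∀ y, y ≠ x → R.pref i hi x y := by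
  have := R.isSTO i hi
  obtain ⟨x, -, hx⟩ := (Finite.wellFounded_of_trans_of_irrefl (R.pref i hi)).has_min
    Set.univ Set.univ_nonempty
  refine ⟨x, fun y hy => ?_⟩
  rcases trichotomous_of (R.pref i hi) x y with h | rfl | h
  exacts [h, absurd rfl hy, absurd h (hx y trivial)]

theorem ext_of_pref {R S : Profile V A} (he : R.electorate = S.electorate)
    (hp : ∀ i hi hi', R.pref i hi = S.pref i hi') : R = S := by
  obtain ⟨E, _, p, _⟩ := R
  obtain ⟨E', _, p', _⟩ := S
  dsimp only at he hp
  subst he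
  obtain rfl : p = p' := funext fun i => funext fun hi => hp i hi hi
  rfl

theorem margin_eq_card_of_forall_pref (R : Profile V A) {x y : A}
    (h : ∀ i (hi : i ∈ R.electorate), R.pref i hi x y) : margin R x y = #R.electorate := by
  have hxy : R.electorate.attach.filter (fun i => R.pref i.1 i.2 x y) = R.electorate.attach :=
    filter_true_of_mem fun i _ => h i.1 i.2
  have hyx : R.electorate.attach.filter (fun i => R.pref i.1 i.2 y x) = ∅ :=
    filter_false_of_mem fun i _ => R.pref_asymm i.2 (h i.1 i.2)
  simp [margin, hxy, hyx]

theorem isCondorcetWinner_of_forall_pref {R : Profile V A} {x : A}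
    (h : ∀ y, y ≠ x → ∀ i (hi : i ∈ R.electorate), R.pref i hi x y) :
    IsCondorcetWinner R x := fun y hy => by
  rw [R.margin_eq_card_of_forall_pref (h y hy)]
  exact_mod_cast R.nonempty.card_pos

end Profile

/-- By induction on the electorate: a single voter's top choice is the Condorcet winner, and by
participation an additional voter makes the outcome one she ranks weakly above the previous one,
hence one that is still in `S`. -/
theorem CondorcetExtension.mem_of_forall_pref [Finite A] [DecidableEq V] {f : Profile V A → A}
    (hf : CondorcetExtension f) (hp : Participation f) {S : Set A} (hS : S.Nonempty)
    (R : Profile V A)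
    (hR : ∀ i (hi : i ∈ R.electorate), ∀ x ∈ S, ∀ y ∉ S, R.pref i hi x y) : f R ∈ S := by
  obtain ⟨n, hn⟩ : ∃ n, #R.electorate = n + 1 :=
    ⟨_, (Nat.succ_pred_eq_of_pos R.nonempty.card_pos).symm⟩
  induction n generalizing R with
  | zero =>
    obtain ⟨i, hE⟩ := card_eq_one.mp hn
    have hi : i ∈ R.electorate := hE ▸ mem_singleton_self i
    have : Nonempty A := hS.to_subtype.map Subtype.val
    obtain ⟨x, hx⟩ := R.exists_top hi
    have hCW : IsCondorcetWinner R x := Profile.isCondorcetWinner_of_forall_pref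
      fun y hy j hj => by obtain rfl : j = i := mem_singleton.mp (hE ▸ hj); exact hx y hy
    rw [hf R x hCW]
    by_contra hxS
    obtain ⟨s, hs⟩ := hS
    exact R.pref_asymm hi (hx s (ne_of_mem_of_not_mem hs hxS)) (hR i hi s hs x hxS)
  | succ n ih =>
    obtain ⟨i, hi⟩ := R.nonempty
    have h : (R.electorate.erase i).Nonempty := by
      rw [← card_pos, card_erase_of_mem hi]; omega
    have hmem : f (R.erase i h) ∈ S := ih (R.erase i h) (fun j hj => hR j _)
      (by rw [Profile.erase, card_erase_of_mem hi, hn]; rfl)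
    rcases hp R i hi h with heq | hpref
    · exact heq ▸ hmem
    · by_contra hRS
      exact R.pref_asymm hi hpref (hR i hi _ hmem _ hRS)

section TypeCounts

variable [DecidableEq V] [DecidableEq τ] {E : Finset V} {t : V → τ} {c : τ → ℕ} {i : V}

theorem card_filter_erase_eq_update (hc : ∀ k, #{v ∈ E | t v = k} = c k) (hi : i ∈ E)
    (k : τ) : #{v ∈ E.erase i | t v = k} = update c (t i) (c (t i) - 1) k := by
  rw [filter_erase]
  rcases eq_or_ne k (t i) with rfl | hk
  · have hi' : i ∈ ({v ∈ E | t v = t i} : Finset V) := mem_filter.mpr ⟨hi, rfl⟩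
    rw [card_erase_of_mem hi', hc, update_self]
  · rw [erase_eq_of_notMem fun h => hk (mem_filter.mp h).2.symm, hc, update_of_ne hk]

theorem card_filter_insert_eq_update (hc : ∀ k, #{v ∈ E | t v = k} = c k) (hi : i ∉ E)
    (j k : τ) : #{v ∈ insert i E | update t i j v = k} = update c j (c j + 1) k := by
  have hE : #{v ∈ E | update t i j v = k} = c k := by
    rw [← hc]
    exact congrArg card (filter_congr fun v hv => by rw [update_of_ne (ne_of_mem_of_not_mem hv hi)])
  rw [filter_insert, update_self]
  rcases eq_or_ne k j with rfl | hk
  · rw [if_pos rfl, card_insert_of_notMem fun h => hi (mem_filter.mp h).1, hE, update_self]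
  · rw [if_neg (Ne.symm hk), hE, update_of_ne hk]

theorem exists_card_filter_eq [Fintype V] [Fintype τ] [Nonempty τ] (c : τ → ℕ)
    (hc : ∑ k, c k ≤ Fintype.card V) :
    ∃ (E : Finset V) (t : V → τ), ∀ k, #{v ∈ E | t v = k} = c k := by
  induction hn : ∑ k, c k generalizing c with
  | zero =>
    refine ⟨∅, fun _ => Classical.arbitrary τ, fun k => ?_⟩
    rw [filter_empty, card_empty, (sum_eq_zero_iff.mp hn) k (mem_univ k)]
  | succ n ih =>
    obtain ⟨j, hj⟩ : ∃ j, c j ≠ 0 := not_forall.mp fun h => by simp [h] at hn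
    have hsum : ∑ k, update c j (c j - 1) k = n := by
      rw [sum_eq_add_sum_sdiff_singleton_of_mem (mem_univ j)] at hn
      rw [sum_update_of_mem (mem_univ j)]
      omega
    obtain ⟨E, t, hE⟩ := ih _ (by omega) hsum
    have hcard : #E = n := by
      rw [card_eq_sum_card_fiberwise (f := t) (t := univ) fun _ _ => mem_univ _]
      simp only [hE, hsum]
    obtain ⟨i, hi⟩ : ∃ i, i ∉ E := not_forall.mp fun h => by
      rw [eq_univ_of_forall h, card_univ] at hcard
      omega
    refine ⟨insert i E, update t i j, fun k => ?_⟩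
    rw [card_filter_insert_eq_update hE hi, update_self, Nat.sub_add_cancel (Nat.pos_of_ne_zero hj),
      update_idem, update_eq_self]

end TypeCounts

namespace Profile

def HasTypeCounts [DecidableEq τ] (R : Profile V A) (P : τ → A → A → Prop) (c : τ → ℕ) :
    Prop :=
  ∃ t : V → τ, (∀ i (hi : i ∈ R.electorate), R.pref i hi = P (t i)) ∧
    ∀ j, #{i ∈ R.electorate | t i = j} = c j

def ofTypes (P : τ → A → A → Prop) (hP : ∀ j, IsStrictTotalOrder A (P j)) (E : Finset V)
    (hE : E.Nonempty) (t : V → τ) : Profile V A :=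
  ⟨E, hE, fun i _ => P (t i), fun i _ => hP (t i)⟩

section HasTypeCounts

variable [DecidableEq τ] {R : Profile V A} {P : τ → A → A → Prop} {c : τ → ℕ}

theorem HasTypeCounts.card_electorate [Fintype τ] (hR : R.HasTypeCounts P c) :
    #R.electorate = ∑ j, c j := by
  obtain ⟨t, -, hc⟩ := hR
  rw [card_eq_sum_card_fiberwise (f := t) (t := univ) fun _ _ => mem_univ _]
  exact sum_congr rfl fun j _ => hc j

theorem HasTypeCounts.card_filter_pref [Fintype τ] (hR : R.HasTypeCounts P c) (x y : A) :
    #(R.electorate.attach.filter fun i => R.pref i.1 i.2 x y) = ∑ j with P j x y, c j := by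
  obtain ⟨t, hp, hc⟩ := hR
  have : (R.electorate.attach.filter fun i => R.pref i.1 i.2 x y)
      = R.electorate.attach.filter fun i => P (t i.1) x y := by
    refine filter_congr fun i _ => ?_
    rw [hp]
  rw [this, card_filter, sum_attach R.electorate fun i => if P (t i) x y then 1 else 0,
    ← card_filter,
    card_eq_sum_card_fiberwise (f := t) (t := univ.filter fun j => P j x y)
      fun i hi => by simpa using (mem_filter.mp hi).2]
  refine sum_congr rfl fun j hj => ?_
  rw [filter_filter, ← hc j]
  congr 1
  exact filter_congr fun i _ => ⟨And.right, fun h => ⟨h ▸ (mem_filter.mp hj).2, h⟩⟩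

theorem HasTypeCounts.margin_eq [Fintype τ] (hR : R.HasTypeCounts P c) (x y : A) :
    margin R x y = ∑ j with P j x y, (c j : ℤ) - ∑ j with P j y x, (c j : ℤ) := by
  rw [margin, hR.card_filter_pref, hR.card_filter_pref]
  push_cast
  rfl

theorem HasTypeCounts.exists_erase [DecidableEq V] (hR : R.HasTypeCounts P c) {j : τ}
    (hj : c j ≠ 0) (hcard : 2 ≤ #R.electorate) :
    ∃ (i : V) (hi : i ∈ R.electorate) (h : (R.electorate.erase i).Nonempty),
      R.pref i hi = P j ∧ (R.erase i h).HasTypeCounts P (update c j (c j - 1)) := by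
  obtain ⟨t, hp, hc⟩ := hR
  obtain ⟨i, hij⟩ : {i ∈ R.electorate | t i = j}.Nonempty := by
    rw [← card_pos, hc]; omega
  obtain ⟨hi, rfl⟩ := mem_filter.mp hij
  have h : (R.electorate.erase i).Nonempty := by
    rw [← card_pos, card_erase_of_mem hi]; omega
  exact ⟨i, hi, h, hp i hi, t, fun v hv => hp v _, card_filter_erase_eq_update hc hi⟩

theorem HasTypeCounts.exists_add [DecidableEq V] [Fintype V] [Fintype τ]
    (hP : ∀ j, IsStrictTotalOrder A (P j)) (hR : R.HasTypeCounts P c)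
    (hcard : ∑ k, c k < Fintype.card V) (j : τ) :
    ∃ (R' : Profile V A) (i : V) (hi : i ∈ R'.electorate)
      (h : (R'.electorate.erase i).Nonempty),
      R'.erase i h = R ∧ R'.pref i hi = P j ∧ R'.HasTypeCounts P (update c j (c j + 1)) := by
  obtain ⟨i, hi⟩ : ∃ i, i ∉ R.electorate := not_forall.mp fun h => by
    rw [← hR.card_electorate, eq_univ_of_forall h, card_univ] at hcard
    omega
  obtain ⟨t, hp, hc⟩ := hR
  have h : ((insert i R.electorate).erase i).Nonempty := by
    rw [erase_insert hi]; exact R.nonempty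
  refine ⟨ofTypes P hP (insert i R.electorate) (insert_nonempty _ _) (update t i j), i,
    mem_insert_self _ _, h, ?_, by simp [ofTypes], update t i j, fun _ _ => rfl,
    card_filter_insert_eq_update hc hi j⟩
  refine ext_of_pref (erase_insert hi) fun v hv _ => ?_
  rw [hp, ← update_of_ne (ne_of_mem_erase hv) j t]
  rfl

theorem exists_hasTypeCounts [Fintype V] [Fintype τ] (hP : ∀ j, IsStrictTotalOrder A (P j))
    (hc : ∑ k, c k ≤ Fintype.card V) (hc₀ : ∑ k, c k ≠ 0) :
    ∃ R : Profile V A, R.HasTypeCounts P c := by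
  obtain ⟨j, -⟩ : ∃ j, c j ≠ 0 := not_forall.mp fun h => by simp [h] at hc₀
  have : Nonempty τ := ⟨j⟩
  obtain ⟨E, t, hE⟩ := exists_card_filter_eq c hc
  have hne : E.Nonempty := by
    rw [← card_pos, card_eq_sum_card_fiberwise (f := t) (t := univ) fun _ _ => mem_univ _]
    simp only [hE]; omega
  exact ⟨ofTypes P hP E hne t, t, fun _ _ => rfl, hE⟩

end HasTypeCounts

end Profile

section RankPref

variable {k : ℕ} {a : Fin k → A} {enc : A → ℕ} {q : Fin k → Fin k}

/-- The ranking with `a u` in position `q u` (`0` is the top), followed by all other alternatives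
in increasing order of `enc`. -/
def rankPref (a : Fin k → A) (enc : A → ℕ) (q : Fin k → Fin k) : A → A → Prop :=
  InvImage (· < ·) (extend a (fun u => (q u : ℕ)) fun x => k + enc x)

theorem rankPref_apply_apply (ha : Injective a) (u v : Fin k) :
    rankPref a enc q (a u) (a v) ↔ q u < q v := by
  simp only [rankPref, InvImage, ha.extend_apply, Fin.val_fin_lt]

theorem rankPref_apply_of_notMem_range (ha : Injective a) (u : Fin k) {x : A}
    (hx : x ∉ Set.range a) : rankPref a enc q (a u) x := by
  simp only [rankPref, InvImage, ha.extend_apply, extend_apply' _ _ _ hx]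
  omega

theorem isStrictTotalOrder_rankPref (ha : Injective a) (henc : Injective enc)
    (hq : Injective q) : IsStrictTotalOrder A (rankPref a enc q) := by
  have hinj : Injective (extend a (fun u => (q u : ℕ)) fun x => k + enc x) := by
    intro x y hxy
    by_cases hx : x ∈ Set.range a <;> by_cases hy : y ∈ Set.range a
    · obtain ⟨u, rfl⟩ := hx
      obtain ⟨v, rfl⟩ := hy
      simp only [ha.extend_apply, Fin.val_inj] at hxy
      rw [hq hxy]
    · obtain ⟨u, rfl⟩ := hx
      simp only [ha.extend_apply, extend_apply' _ _ _ hy] at hxy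
      omega
    · obtain ⟨v, rfl⟩ := hy
      simp only [ha.extend_apply, extend_apply' _ _ _ hx] at hxy
      omega
    · simp only [extend_apply' _ _ _ hx, extend_apply' _ _ _ hy] at hxy
      exact henc (by omega)
  exact { toTrichotomous := InvImage.trichotomous hinj
          irrefl := fun x => lt_irrefl _
          trans := fun _ _ _ => lt_trans }

theorem mem_range_of_hasTypeCounts [Finite A] [NeZero k] [DecidableEq V] [DecidableEq τ]
    {f : Profile V A → A} (hf : CondorcetExtension f) (hp : Participation f)
    (ha : Injective a) {Q : τ → Fin k → Fin k} {c : τ → ℕ} {R : Profile V A}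
    (hR : R.HasTypeCounts (fun j => rankPref a enc (Q j)) c) : f R ∈ Set.range a := by
  obtain ⟨t, hpref, -⟩ := hR
  refine hf.mem_of_forall_pref hp (Set.range_nonempty a) R fun i hi x ⟨u, hu⟩ y hy => ?_
  rw [hpref, ← hu]
  exact rankPref_apply_of_notMem_range ha u hy

theorem Participation.eq_or_lt_of_rankPref [DecidableEq V] {f : Profile V A → A}
    (hp : Participation f) (ha : Injective a) {R : Profile V A} {i : V} (hi : i ∈ R.electorate)
    (h : (R.electorate.erase i).Nonempty) (hpref : R.pref i hi = rankPref a enc q) {u v : Fin k}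
    (hu : f R = a u) (hv : f (R.erase i h) = a v) : u = v ∨ q u < q v := by
  rcases hp R i hi h with heq | hlt
  · exact Or.inl (ha (hu.symm.trans (heq.trans hv)))
  · rw [hpref, hu, hv] at hlt
    exact Or.inr ((rankPref_apply_apply ha u v).mp hlt)

end RankPref

namespace NoShow

/-- `voterRank j u` is the position (`0` = top) of alternative `u` in the ranking of voter type
`j`; e.g. type `0` ranks `3 ≻ 0 ≻ 1 ≻ 2`. -/
def voterRank : Fin 10 → Fin 4 → Fin 4 :=
  ![![1, 2, 3, 0], ![0, 2, 3, 1], ![0, 1, 2, 3], ![3, 1, 2, 0], ![3, 0, 2, 1],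
    ![3, 0, 1, 2], ![2, 0, 1, 3], ![2, 3, 1, 0], ![2, 3, 0, 1], ![1, 3, 2, 0]]

theorem voterRank_injective : ∀ j, Injective (voterRank j) := by decide

def tally (c : Fin 10 → ℕ) (u v : Fin 4) : ℤ :=
  ∑ j with voterRank j u < voterRank j v, (c j : ℤ) -
    ∑ j with voterRank j v < voterRank j u, (c j : ℤ)

/-- `(c, x)` stands for: the rule never selects `x` at a profile with `c j` voters of type `j`. -/
abbrev Claim := (Fin 10 → ℕ) × Fin 4

inductive Rule
  | condorcet (w : Fin 4)
  | erase (j : Fin 10)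
  | add (j : Fin 10)

/-- If `x` won, participation would make the outcome after removing a voter of type `j` one that
she ranks weakly below `x`, and the outcome after adding one a choice she ranks weakly above `x`;
`n` bounds the number of voters available. -/
def Rule.Justifies (n : ℕ) (known : List Claim) (c : Fin 10 → ℕ) (x : Fin 4) : Rule → Prop
  | condorcet w => x ≠ w ∧ ∀ y, y ≠ w → 0 < tally c w y
  | erase j => c j ≠ 0 ∧ 2 ≤ ∑ k, c k ∧
      ∀ w, x = w ∨ voterRank j x < voterRank j w → (update c j (c j - 1), w) ∈ known
  | add j => ∑ k, c k < n ∧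
      ∀ w, w = x ∨ voterRank j w < voterRank j x → (update c j (c j + 1), w) ∈ known

instance (n : ℕ) (known : List Claim) (c : Fin 10 → ℕ) (x : Fin 4) (r : Rule) :
    Decidable (r.Justifies n known c x) := by
  cases r <;> unfold Rule.Justifies <;> infer_instance

structure Step where
  claim : Claim
  rule : Rule

def checkDerivation (n : ℕ) : List Claim → List Step → Bool
  | _, [] => true
  | known, s :: rest =>
    decide (s.rule.Justifies n known s.claim.1 s.claim.2) &&
      checkDerivation n (s.claim :: known) rest

section Soundness

variable {f : Profile V A → A} {a : Fin 4 → A} {enc : A → ℕ}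

def Excludes (f : Profile V A → A) (a : Fin 4 → A) (enc : A → ℕ) (φ : Claim) : Prop :=
  ∀ R : Profile V A, R.HasTypeCounts (fun j => rankPref a enc (voterRank j)) φ.1 →
    f R ≠ a φ.2

theorem isCondorcetWinner_of_tally (ha : Injective a) {c : Fin 10 → ℕ} {R : Profile V A}
    (hR : R.HasTypeCounts (fun j => rankPref a enc (voterRank j)) c) {w : Fin 4}
    (hw : ∀ y, y ≠ w → 0 < tally c w y) : IsCondorcetWinner R (a w) := by
  intro x hx
  by_cases hxa : x ∈ Set.range a
  · obtain ⟨y, rfl⟩ := hxa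
    have hpref : ∀ u v, (univ.filter fun j => rankPref a enc (voterRank j) (a u) (a v)) =
        univ.filter fun j => voterRank j u < voterRank j v :=
      fun u v => filter_congr fun j _ => rankPref_apply_apply ha u v
    rw [hR.margin_eq, hpref, hpref]
    exact hw y fun h => hx (h ▸ rfl)
  · obtain ⟨t, hpref, -⟩ := hR
    rw [R.margin_eq_card_of_forall_pref fun i hi => by
      rw [hpref]; exact rankPref_apply_of_notMem_range ha w hxa]
    exact_mod_cast R.nonempty.card_pos

theorem excludes_of_condorcet (hf : CondorcetExtension f) (ha : Injective a) {c : Fin 10 → ℕ}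
    {x w : Fin 4} (hxw : x ≠ w) (hw : ∀ y, y ≠ w → 0 < tally c w y) :
    Excludes f a enc (c, x) := fun R hR hx =>
  hxw (ha (hx.symm.trans (hf R _ (isCondorcetWinner_of_tally ha hR hw))))

variable [DecidableEq V]

theorem excludes_of_erase [Finite A] (hf : CondorcetExtension f) (hp : Participation f)
    (ha : Injective a) {known : List Claim} (hknown : ∀ φ ∈ known, Excludes f a enc φ)
    {c : Fin 10 → ℕ} {x : Fin 4} {j : Fin 10} (hj : c j ≠ 0) (hc : 2 ≤ ∑ k, c k)
    (hmem : ∀ w, x = w ∨ voterRank j x < voterRank j w →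
      (update c j (c j - 1), w) ∈ known) :
    Excludes f a enc (c, x) := by
  intro R hR hx
  obtain ⟨i, hi, h, hpref, hR'⟩ := hR.exists_erase hj (hR.card_electorate ▸ hc)
  obtain ⟨w, hw⟩ := mem_range_of_hasTypeCounts hf hp ha hR'
  exact hknown _ (hmem w (hp.eq_or_lt_of_rankPref ha hi h hpref hx hw.symm)) _ hR' hw.symm

theorem excludes_of_add [Fintype V] [Finite A] (hf : CondorcetExtension f) (hp : Participation f)
    (ha : Injective a) (henc : Injective enc) {n : ℕ} (hn : n ≤ Fintype.card V)
    {known : List Claim} (hknown : ∀ φ ∈ known, Excludes f a enc φ)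
    {c : Fin 10 → ℕ} {x : Fin 4} {j : Fin 10} (hc : ∑ k, c k < n)
    (hmem : ∀ w, w = x ∨ voterRank j w < voterRank j x →
      (update c j (c j + 1), w) ∈ known) :
    Excludes f a enc (c, x) := by
  intro R hR hx
  obtain ⟨R', i, hi, h, rfl, hpref, hR'⟩ := hR.exists_add
    (fun j => isStrictTotalOrder_rankPref ha henc (voterRank_injective j)) (hc.trans_le hn) j
  obtain ⟨w, hw⟩ := mem_range_of_hasTypeCounts hf hp ha hR'
  exact hknown _ (hmem w (hp.eq_or_lt_of_rankPref ha hi h hpref hw.symm hx)) _ hR' hw.symm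

theorem excludes_of_checkDerivation [Fintype V] [Finite A] (hf : CondorcetExtension f)
    (hp : Participation f) (ha : Injective a) (henc : Injective enc) {n : ℕ}
    (hn : n ≤ Fintype.card V) {known : List Claim}
    (hknown : ∀ φ ∈ known, Excludes f a enc φ)
    {steps : List Step} (hcheck : checkDerivation n known steps = true) :
    ∀ φ ∈ steps.map Step.claim, Excludes f a enc φ := by
  induction steps generalizing known with
  | nil => simp
  | cons s steps ih =>
    obtain ⟨⟨c, x⟩, r⟩ := s
    simp only [checkDerivation, Bool.and_eq_true, decide_eq_true_eq] at hcheck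
    obtain ⟨hr, hrest⟩ := hcheck
    have hs : Excludes f a enc (c, x) := by
      cases r with
      | condorcet w => exact excludes_of_condorcet hf ha hr.1 hr.2
      | erase j => exact excludes_of_erase hf hp ha hknown hr.1 hr.2.1 hr.2.2
      | add j => exact excludes_of_add hf hp ha henc hn hknown hr.1 hr.2
    have := ih (known := (c, x) :: known) (List.forall_mem_cons.mpr ⟨hs, hknown⟩) hrest
    simpa [hs] using this

end Soundness

def derivation : List Step := [
    ⟨(![2, 1, 3, 0, 0, 0, 0, 0, 1, 2], 0), .condorcet 3⟩,
    ⟨(![2, 0, 3, 0, 0, 0, 0, 0, 1, 2], 0), .add 1⟩,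
    ⟨(![2, 0, 3, 0, 1, 0, 0, 0, 1, 2], 1), .condorcet 3⟩,
    ⟨(![2, 0, 3, 0, 0, 0, 0, 0, 1, 2], 1), .add 4⟩,
    ⟨(![2, 0, 3, 0, 0, 0, 0, 0, 2, 2], 0), .erase 8⟩,
    ⟨(![2, 0, 3, 0, 0, 0, 0, 0, 2, 2], 1), .erase 8⟩,
    ⟨(![2, 0, 3, 0, 0, 0, 0, 0, 3, 2], 0), .erase 8⟩,
    ⟨(![2, 0, 3, 0, 0, 1, 0, 0, 3, 2], 0), .erase 5⟩,
    ⟨(![2, 0, 3, 0, 0, 2, 0, 0, 3, 2], 0), .erase 5⟩,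
    ⟨(![2, 0, 1, 0, 0, 2, 0, 1, 3, 2], 3), .condorcet 2⟩,
    ⟨(![2, 0, 1, 0, 0, 2, 0, 0, 3, 2], 3), .add 7⟩,
    ⟨(![2, 0, 2, 0, 0, 2, 0, 0, 3, 2], 3), .erase 2⟩,
    ⟨(![2, 0, 3, 0, 0, 2, 0, 0, 3, 2], 3), .erase 2⟩,
    ⟨(![2, 0, 3, 0, 0, 2, 0, 0, 3, 1], 0), .add 9⟩,
    ⟨(![2, 0, 0, 0, 0, 2, 0, 1, 3, 1], 3), .condorcet 2⟩,
    ⟨(![2, 0, 0, 0, 0, 2, 0, 0, 3, 1], 3), .add 7⟩,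
    ⟨(![2, 0, 1, 0, 0, 2, 0, 0, 3, 1], 3), .erase 2⟩,
    ⟨(![2, 0, 2, 0, 0, 2, 0, 0, 3, 1], 3), .erase 2⟩,
    ⟨(![2, 0, 3, 0, 0, 2, 0, 0, 3, 1], 3), .erase 2⟩,
    ⟨(![2, 0, 3, 0, 0, 2, 1, 0, 3, 1], 0), .erase 6⟩,
    ⟨(![2, 0, 3, 0, 0, 2, 2, 0, 0, 0], 1), .condorcet 0⟩,
    ⟨(![2, 0, 3, 0, 0, 2, 1, 0, 0, 0], 1), .add 6⟩,
    ⟨(![2, 0, 3, 0, 0, 2, 1, 0, 0, 1], 1), .erase 9⟩,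
    ⟨(![2, 0, 3, 0, 0, 2, 1, 0, 1, 1], 1), .erase 8⟩,
    ⟨(![2, 0, 3, 0, 0, 2, 1, 0, 2, 1], 1), .erase 8⟩,
    ⟨(![2, 0, 3, 0, 0, 2, 1, 0, 3, 1], 1), .erase 8⟩,
    ⟨(![2, 0, 3, 0, 0, 2, 1, 0, 1, 0], 1), .erase 8⟩,
    ⟨(![2, 0, 3, 0, 0, 2, 1, 0, 2, 0], 1), .erase 8⟩,
    ⟨(![2, 0, 3, 0, 0, 2, 1, 0, 3, 0], 1), .erase 8⟩,
    ⟨(![2, 0, 3, 0, 0, 2, 2, 0, 1, 0], 1), .erase 8⟩,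
    ⟨(![2, 0, 3, 0, 0, 2, 2, 0, 2, 0], 1), .erase 8⟩,
    ⟨(![2, 0, 3, 0, 0, 2, 2, 0, 3, 0], 1), .erase 8⟩,
    ⟨(![0, 0, 0, 0, 0, 2, 2, 0, 3, 0], 2), .condorcet 1⟩,
    ⟨(![0, 0, 0, 0, 0, 2, 2, 0, 3, 0], 3), .condorcet 1⟩,
    ⟨(![0, 0, 1, 0, 0, 2, 2, 0, 3, 0], 2), .erase 2⟩,
    ⟨(![0, 0, 1, 1, 0, 2, 2, 0, 3, 0], 3), .condorcet 1⟩,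
    ⟨(![0, 0, 1, 0, 0, 2, 2, 0, 3, 0], 3), .add 3⟩,
    ⟨(![0, 0, 2, 0, 0, 2, 2, 0, 3, 0], 2), .erase 2⟩,
    ⟨(![0, 0, 2, 0, 0, 2, 2, 0, 3, 0], 3), .erase 2⟩,
    ⟨(![0, 0, 3, 0, 0, 2, 2, 0, 3, 0], 2), .erase 2⟩,
    ⟨(![1, 0, 3, 0, 0, 2, 2, 0, 3, 0], 2), .erase 0⟩,
    ⟨(![2, 0, 3, 0, 0, 2, 2, 0, 3, 0], 2), .erase 0⟩,
    ⟨(![2, 0, 3, 0, 0, 2, 1, 0, 3, 0], 2), .add 6⟩,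
    ⟨(![2, 0, 3, 0, 0, 2, 1, 0, 3, 1], 2), .erase 9⟩,
    ⟨(![2, 0, 0, 0, 0, 2, 1, 0, 3, 1], 3), .erase 6⟩,
    ⟨(![2, 0, 1, 0, 0, 2, 1, 0, 3, 1], 3), .erase 2⟩,
    ⟨(![2, 0, 2, 0, 0, 2, 1, 0, 3, 1], 3), .erase 2⟩,
    ⟨(![2, 0, 3, 0, 0, 2, 1, 0, 3, 1], 3), .erase 2⟩]

def finalCounts : Fin 10 → ℕ := ![2, 0, 3, 0, 0, 2, 1, 0, 3, 1]

theorem checkDerivation_derivation : checkDerivation 12 [] derivation = true := by decide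

theorem mem_derivation (x : Fin 4) : (finalCounts, x) ∈ derivation.map Step.claim := by
  revert x; decide

end NoShow

end

theorem stmt5_no_condorcet_extension_with_participation_general
    (V A : Type*) [Fintype V] [DecidableEq V] [Fintype A]
    (hm : 4 ≤ Fintype.card A) (hn : 12 ≤ Fintype.card V) :
    ¬ ∃ f : Profile V A → A, CondorcetExtension f ∧ Participation f := by
  rintro ⟨f, hf, hp⟩
  obtain ⟨a⟩ : Nonempty (Fin 4 ↪ A) := Embedding.nonempty_of_card_le (by simpa using hm)
  have henc : Injective fun x => (Fintype.equivFin A x : ℕ) :=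
    Fin.val_injective.comp (Fintype.equivFin A).injective
  have hsum : ∑ k, NoShow.finalCounts k = 12 := by decide
  obtain ⟨R, hR⟩ := Profile.exists_hasTypeCounts
    (fun j => isStrictTotalOrder_rankPref a.injective henc (NoShow.voterRank_injective j))
    (hsum ▸ hn) (by omega)
  obtain ⟨x, hx⟩ := mem_range_of_hasTypeCounts hf hp a.injective hR
  exact NoShow.excludes_of_checkDerivation hf hp a.injective henc hn (List.forall_mem_nil _)
    NoShow.checkDerivation_derivation _ (NoShow.mem_derivation x) R hR hx.symm

/-- For `m ≥ 4` alternatives and `n ≥ 12` voters, there is no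
Condorcet extension satisfying participation. -/
theorem stmt5_no_condorcet_extension_with_participation
    (V A : Type*) [Fintype V] [DecidableEq V] [Fintype A] [DecidableEq A]
    (hm : 4 ≤ Fintype.card A) (hn : 12 ≤ Fintype.card V) :
    ¬ ∃ f : Profile V A → A, CondorcetExtension f ∧ Participation f :=
  stmt5_no_condorcet_extension_with_participation_general V A hm hn
end

section
/- Let f be a probabilistic voting rule satisfying strong SD-participation, and let F be the support of f, i.e., F(R) = {x ∈ A : f(R)(x) > 0} for every profile R. Then the set-valued voting rule F satisfies both optimistic participation and pessimistic participation. -/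
open scoped Classical

/-!
Voter `i` joining moves probability mass upwards in every upper set `{y | y ⪰ᵢ x}`. If `y` is
in the support without `i`, its upper set carries positive mass, hence so it does with `i`, so
the best alternative of the new support is at least as good as `y`. If `y` is the worst
alternative of the support without `i`, its upper set carries all the mass, hence so it does
with `i`, and the whole new support lies weakly above `y`.
-/

namespace Lottery

variable {A : Type*} [Fintype A]

noncomputable def support (p : Lottery A) : Finset A :=
  Finset.univ.filter fun x => 0 < p.prob x

variable {p q : Lottery A} {s : Finset A} {x : A}

theorem mem_support : x ∈ p.support ↔ 0 < p.prob x := by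
  simp [support]

theorem sum_eq_one_of_support_subset (h : p.support ⊆ s) : ∑ y ∈ s, p.prob y = 1 := by
  rw [← p.sum_one]
  refine Finset.sum_subset (Finset.subset_univ s) fun y _ hys => ?_
  exact le_antisymm (not_lt.mp fun hy => hys (h (mem_support.mpr hy))) (p.nonneg y)

theorem support_subset_of_one_le_sum (h : 1 ≤ ∑ y ∈ s, p.prob y) : p.support ⊆ s := by
  intro y hy
  by_contra hys
  have hsplit : p.prob y + ∑ z ∈ s, p.prob z ≤ 1 := by
    rw [← p.sum_one, ← Finset.sum_insert hys]
    exact Finset.sum_le_sum_of_subset_of_nonneg (Finset.subset_univ _)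
      fun z _ _ => p.nonneg z
  linarith [mem_support.mp hy]

theorem exists_mem_support_of_sum_pos (h : 0 < ∑ y ∈ s, p.prob y) : ∃ y ∈ s, y ∈ p.support := by
  obtain ⟨y, hys, hy⟩ := Finset.exists_ne_zero_of_sum_ne_zero h.ne'
  exact ⟨y, hys, mem_support.mpr ((p.nonneg y).lt_of_ne' hy)⟩

theorem sum_pos_of_mem_support (hxs : x ∈ s) (hx : x ∈ p.support) : 0 < ∑ y ∈ s, p.prob y :=
  (mem_support.mp hx).trans_le (Finset.single_le_sum (fun y _ => p.nonneg y) hxs)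

theorem exists_mem_support_of_sum_le (hqp : ∑ y ∈ s, q.prob y ≤ ∑ y ∈ s, p.prob y)
    (hxs : x ∈ s) (hx : x ∈ q.support) : ∃ y ∈ s, y ∈ p.support :=
  exists_mem_support_of_sum_pos ((sum_pos_of_mem_support hxs hx).trans_le hqp)

theorem support_subset_of_sum_le (hqp : ∑ y ∈ s, q.prob y ≤ ∑ y ∈ s, p.prob y)
    (hq : q.support ⊆ s) : p.support ⊆ s :=
  support_subset_of_one_le_sum ((sum_eq_one_of_support_subset hq).symm.trans_le hqp)

end Lottery

noncomputable def weakUpperSet {A : Type*} [Fintype A] (r : A → A → Prop) (x : A) : Finset A :=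
  Finset.univ.filter fun y => y = x ∨ r y x

theorem mem_weakUpperSet {A : Type*} [Fintype A] {r : A → A → Prop} {x y : A} :
    y ∈ weakUpperSet r x ↔ y = x ∨ r y x := by
  simp [weakUpperSet]

namespace SDPref

open Lottery

variable {A : Type*} [Fintype A] {r : A → A → Prop} {p q : Lottery A} {x y : A}

theorem sum_weakUpperSet_le (hpq : SDPref r p q) (x : A) :
    ∑ z ∈ weakUpperSet r x, q.prob z ≤ ∑ z ∈ weakUpperSet r x, p.prob z :=
  hpq x

theorem eq_or_rel_of_isMaxOf_support [IsTrans A r] (hpq : SDPref r p q)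
    (hx : IsMaxOf r p.support x) (hy : y ∈ q.support) : x = y ∨ r x y := by
  obtain ⟨w, hwy, hw⟩ := exists_mem_support_of_sum_le (hpq.sum_weakUpperSet_le y)
    (mem_weakUpperSet.mpr (Or.inl rfl)) hy
  rcases hx.2 w hw, mem_weakUpperSet.mp hwy with ⟨rfl | hxw, rfl | hwy⟩
  · exact Or.inl rfl
  · exact Or.inr hwy
  · exact Or.inr hxw
  · exact Or.inr (_root_.trans hxw hwy)

theorem eq_or_rel_of_isMinOf_support (hpq : SDPref r p q) (hx : x ∈ p.support)
    (hy : IsMinOf r q.support y) : x = y ∨ r x y := by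
  have hq : q.support ⊆ weakUpperSet r y := fun z hz => mem_weakUpperSet.mpr (hy.2 z hz)
  exact mem_weakUpperSet.mp (support_subset_of_sum_le (hpq.sum_weakUpperSet_le y) hq hx)

end SDPref

theorem stmt13_support_satisfies_participation_general
    {V A : Type*} [DecidableEq V] [Fintype A]
    (f : Profile V A → Lottery A) (hf : StrongSDParticipation f)
    (F : Profile V A → Finset A)
    (hF : ∀ R, F R = Finset.univ.filter (fun x => 0 < (f R).prob x)) :
    OptimisticParticipation F ∧ PessimisticParticipation F := by
  obtain rfl : F = fun R => (f R).support := funext hF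
  constructor
  · intro R i hi h x y hx hy
    have := R.isSTO i hi
    exact (hf R i hi h).eq_or_rel_of_isMaxOf_support hx hy.1
  · intro R i hi h x y hx hy
    exact (hf R i hi h).eq_or_rel_of_isMinOf_support hx.1 hy

/-- The support of a probabilistic voting rule satisfying strong
SD-participation satisfies both optimistic and pessimistic participation. -/
theorem stmt13_support_satisfies_participation
    {V A : Type*} [Fintype V] [DecidableEq V] [Fintype A] [DecidableEq A]
    (f : Profile V A → Lottery A) (hf : StrongSDParticipation f)
    (F : Profile V A → Finset A)
    (hF : ∀ R, F R = Finset.univ.filter (fun x => 0 < (f R).prob x)) :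
    OptimisticParticipation F ∧ PessimisticParticipation F :=
  stmt13_support_satisfies_participation_general f hf F hF
end
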